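/- arXiv:2310.14160 — 8 statements merged into one kernel-verified Lean document; each statement's English description precedes it below -/
import Mathlib

section
/- For every real θ > 0 and all reals p, q ≥ 0, max{ θ(θ − 2p), θ(θ − 2q), p·q } ≥ θ² (√2 − 1)². -/
/-! Put `t = θ(√2 - 1)`. Because `(√2 - 1)² = 1 - 2(√2 - 1)`, we have `θ(θ - 2t) = t²`.
If `p < t` then `θ(θ - 2p) ≥ θ(θ - 2t) = t²`, likewise for `q`; otherwise `p, q ≥ t ≥ 0`
and `pq ≥ t²`. -/

theorem sq_le_max_of_sq_le_mul_sub {θ t p q : ℝ} (hθ : 0 ≤ θ) (ht : 0 ≤ t)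
    (htθ : t ^ 2 ≤ θ * (θ - 2 * t)) :
    t ^ 2 ≤ max (max (θ * (θ - 2 * p)) (θ * (θ - 2 * q))) (p * q) := by
  rcases lt_or_ge p t with hpt | htp
  · refine le_max_of_le_left (le_max_of_le_left (htθ.trans ?_))
    exact mul_le_mul_of_nonneg_left (by linarith) hθ
  rcases lt_or_ge q t with hqt | htq
  · refine le_max_of_le_left (le_max_of_le_right (htθ.trans ?_))
    exact mul_le_mul_of_nonneg_left (by linarith) hθ
  · exact le_max_of_le_right (sq t ▸ mul_le_mul htp htq ht (ht.trans htp))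

theorem sqrt_two_sub_one_sq : (√2 - 1) ^ 2 = 1 - 2 * (√2 - 1) := by
  nlinarith [Real.sq_sqrt (zero_le_two : (0 : ℝ) ≤ 2)]

theorem max_three_ge_general (θ p q : ℝ) (hθ : 0 < θ) :
    θ ^ 2 * (Real.sqrt 2 - 1) ^ 2 ≤ max (max (θ * (θ - 2 * p)) (θ * (θ - 2 * q))) (p * q) := by
  have hs : 0 ≤ √2 - 1 := sub_nonneg.2 Real.one_lt_sqrt_two.le
  rw [← mul_pow]
  refine sq_le_max_of_sq_le_mul_sub hθ.le (mul_nonneg hθ.le hs) (le_of_eq ?_)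
  rw [mul_pow, sqrt_two_sub_one_sq]
  ring

/-- for every `θ > 0` and `p, q ≥ 0`,
`max {θ(θ − 2p), θ(θ − 2q), pq} ≥ θ²(√2 − 1)²`. -/
theorem max_three_ge (θ p q : ℝ) (hθ : 0 < θ) (hp : 0 ≤ p) (hq : 0 ≤ q) :
    θ ^ 2 * (Real.sqrt 2 - 1) ^ 2 ≤ max (max (θ * (θ - 2 * p)) (θ * (θ - 2 * q))) (p * q) :=
  max_three_ge_general θ p q hθ
end

section
/- Let Σ be a finite nonempty alphabet and Σ' its squared alphabet. Let ν, μ : Σ' → [0,1] be probability distributions (Σ_{A ∈ Σ'} ν(A) = Σ_{A ∈ Σ'} μ(A) = 1), and let p = max_{α ∈ Σ} Σ_{A ∈ Σ' : α ∈ A} ν(A). Then Σ_{(A,B) ∈ Σ' × Σ' : A and B are consistent} ν(A)·μ(B) ≤ 2p. -/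
/-! Two consistent nonempty sets intersect, so the event "`a` is consistent with `b`" is covered by
the events "`x ∈ a`" for the at most two letters `x ∈ b`. Each of these has `ν`-probability at
most `p`, which bounds the `ν`-probability of being consistent with any fixed `b` by `2p`;
averaging over `b ∼ μ` gives the claim. -/

/-- The squared alphabet of `A`: subsets of `A` of size one or two. -/
abbrev Sq (A : Type*) := {s : Finset A // 1 ≤ s.card ∧ s.card ≤ 2}

open Finset

theorem sum_ite_le_sum_sum_ite_mem {ι S : Type*} [Fintype ι] [DecidableEq S]
    {ν : ι → ℝ} (hν : ∀ i, 0 ≤ ν i) (F : ι → Finset S) (t : Finset S)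
    {P : ι → Prop} [DecidablePred P] (hP : ∀ i, P i → ∃ x ∈ t, x ∈ F i) :
    ∑ i, (if P i then ν i else 0) ≤ ∑ x ∈ t, ∑ i, if x ∈ F i then ν i else 0 := by
  rw [sum_comm]
  refine sum_le_sum fun i _ => ?_
  split_ifs with hi
  · obtain ⟨x, hxt, hxi⟩ := hP i hi
    calc ν i = if x ∈ F i then ν i else 0 := (if_pos hxi).symm
      _ ≤ ∑ y ∈ t, if y ∈ F i then ν i else 0 :=
        single_le_sum (f := fun y => if y ∈ F i then ν i else 0)
          (fun y _ => ite_nonneg (hν i) le_rfl) hxt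
  · exact sum_nonneg fun y _ => ite_nonneg (hν i) le_rfl

theorem Finset.exists_mem_mem_of_subset_or_subset {S : Type*} {a b : Finset S}
    (ha : a.Nonempty) (hb : b.Nonempty) (h : a ⊆ b ∨ b ⊆ a) : ∃ x ∈ b, x ∈ a := by
  rcases h with hab | hba
  · obtain ⟨x, hx⟩ := ha
    exact ⟨x, hab hx, hx⟩
  · obtain ⟨x, hx⟩ := hb
    exact ⟨x, hx, hba hx⟩

theorem sum_ite_consistent_le {S : Type*} [Fintype S] [DecidableEq S]
    {ν : Sq S → ℝ} (hν : ∀ a, 0 ≤ ν a) {p : ℝ} (hp0 : 0 ≤ p)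
    (hp : ∀ α : S, (∑ a : Sq S, if α ∈ a.1 then ν a else 0) ≤ p) (b : Sq S) :
    (∑ a : Sq S, if a.1 ⊆ b.1 ∨ b.1 ⊆ a.1 then ν a else 0) ≤ 2 * p :=
  calc (∑ a : Sq S, if a.1 ⊆ b.1 ∨ b.1 ⊆ a.1 then ν a else 0)
      ≤ ∑ x ∈ b.1, ∑ a : Sq S, if x ∈ a.1 then ν a else 0 :=
        sum_ite_le_sum_sum_ite_mem hν (fun a : Sq S => a.1) b.1 fun a h =>
          exists_mem_mem_of_subset_or_subset (card_pos.mp a.2.1) (card_pos.mp b.2.1) h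
    _ ≤ b.1.card • p := sum_le_card_nsmul _ _ _ fun α _ => hp α
    _ ≤ 2 * p := by
        rw [nsmul_eq_mul]
        exact mul_le_mul_of_nonneg_right (by exact_mod_cast b.2.2) hp0

theorem consistency_probability_bound_general {S : Type*} [Fintype S] [DecidableEq S]
    (ν μ : Sq S → ℝ)
    (hν0 : ∀ a, 0 ≤ ν a)
    (hμ0 : ∀ a, 0 ≤ μ a)
    (hμs : ∑ a, μ a = 1)
    (p : ℝ)
    (hp : IsGreatest {x : ℝ | ∃ α : S, x = ∑ a : Sq S, if α ∈ a.1 then ν a else 0} p) :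
    (∑ a : Sq S, ∑ b : Sq S, if a.1 ⊆ b.1 ∨ b.1 ⊆ a.1 then ν a * μ b else 0) ≤ 2 * p := by
  have hp0 : 0 ≤ p := by
    obtain ⟨α, rfl⟩ := hp.1
    exact sum_nonneg fun a _ => ite_nonneg (hν0 a) le_rfl
  have hbound := sum_ite_consistent_le hν0 hp0 fun α => hp.2 ⟨α, rfl⟩
  calc (∑ a : Sq S, ∑ b : Sq S, if a.1 ⊆ b.1 ∨ b.1 ⊆ a.1 then ν a * μ b else 0)
      = ∑ b : Sq S, (∑ a : Sq S, if a.1 ⊆ b.1 ∨ b.1 ⊆ a.1 then ν a else 0) * μ b := by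
        rw [sum_comm]
        simp only [sum_mul, ite_mul, zero_mul]
    _ ≤ ∑ b : Sq S, 2 * p * μ b :=
        sum_le_sum fun b _ => mul_le_mul_of_nonneg_right (hbound b) (hμ0 b)
    _ = 2 * p := by rw [← mul_sum, hμs, mul_one]

/-- if `ν, μ` are probability distributions over the squared alphabet of `S`
and `p` is the maximum over `α ∈ S` of the `ν`-probability that `α` belongs to the sampled
element, then the probability (under `ν × μ`) of sampling a consistent pair is at most `2p`.
Here `a` and `b` are consistent if `a ⊆ b` or `b ⊆ a`. -/
theorem consistency_probability_bound {S : Type*} [Fintype S] [DecidableEq S] [Nonempty S]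
    (ν μ : Sq S → ℝ)
    (hν0 : ∀ a, 0 ≤ ν a) (hν1 : ∀ a, ν a ≤ 1)
    (hμ0 : ∀ a, 0 ≤ μ a) (hμ1 : ∀ a, μ a ≤ 1)
    (hνs : ∑ a, ν a = 1) (hμs : ∑ a, μ a = 1)
    (p : ℝ)
    (hp : IsGreatest {x : ℝ | ∃ α : S, x = ∑ a : Sq S, if α ∈ a.1 then ν a else 0} p) :
    (∑ a : Sq S, ∑ b : Sq S, if a.1 ⊆ b.1 ∨ b.1 ⊆ a.1 then ν a * μ b else 0) ≤ 2 * p :=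
  consistency_probability_bound_general ν μ hν0 hμ0 hμs p hp
end

section
/- Let G = (V, E, Σ, Π) be a constraint graph with E nonempty in which every vertex lies on at most d edges (counted with multiplicity), let ε ∈ (0,1), let k ≥ 1 be an integer, and let (ψ^(1), …, ψ^(T)) be a finite sequence of assignments with ψ^(1) = ψ^ini and ψ^(T) = ψ^tar such that consecutive assignments differ on at most k vertices. If val_G(ψ^ini ↭ ψ^tar) < 1 − ε, then there exists t ∈ [T] with val_G(ψ^(t)) < 1 − ε + dk/|E|. -/
/-- Two assignments differ on at most one vertex. -/
def adjOne {V A : Type*} (ψ φ : V → A) : Prop := ∃ v0, ∀ v, v ≠ v0 → ψ v = φ v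

/-- Value of an assignment: the fraction of constraints (indexed by `ι`, with multiplicity)
that it satisfies. -/
noncomputable def valC {V A ι : Type*} [Fintype ι] (sat : ι → (V → A) → Prop)
    (ψ : V → A) : ℝ :=
  (Nat.card {i : ι // sat i ψ} : ℝ) / (Fintype.card ι : ℝ)

/-- The minimum value along a sequence of assignments. -/
noncomputable def valSeqC {V A ι : Type*} [Fintype ι] (sat : ι → (V → A) → Prop)
    (l : List (V → A)) : ℝ :=
  (l.map (valC sat)).foldr min 1

/-- `maxValC sat ψi ψt` is the maximum, over all reconfiguration sequences from `ψi` to `ψt`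
(finite sequences of assignments starting at `ψi`, ending at `ψt`, consecutive assignments
differing on at most one vertex), of the minimum value along the sequence. -/
noncomputable def maxValC {V A ι : Type*} [Fintype ι] (sat : ι → (V → A) → Prop)
    (ψi ψt : V → A) : ℝ :=
  sSup {r : ℝ | ∃ l : List (V → A), l ≠ [] ∧ l.head? = some ψi ∧ l.getLast? = some ψt ∧
    l.Chain' adjOne ∧ r = valSeqC sat l}

/-- Two assignments differ on at most `k` vertices. -/
def diffLe {V A : Type*} (k : ℕ) (ψ φ : V → A) : Prop :=
  ∃ s : Finset V, s.card ≤ k ∧ ∀ v ∉ s, ψ v = φ v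

/-! Refine the given sequence into a reconfiguration sequence by changing the (at most `k`)
differing vertices of each step one at a time. Every intermediate assignment then differs from
some assignment of the given sequence on at most `k` vertices, and since each vertex lies on at
most `d` edges, the two satisfy the same edges up to at most `dk` of them. The refined sequence
has minimum value below `1 - ε`, so one of its assignments has value below `1 - ε`, and its
neighbour in the given sequence has value below `1 - ε + dk/|E|`. -/

section Sequences

variable {V A : Type*}

lemma diffLe_refl (k : ℕ) (ψ : V → A) : diffLe k ψ ψ :=
  ⟨∅, by simp, fun _ _ => rfl⟩

lemma adjOne_update [DecidableEq V] (ψ : V → A) (a : V) (x : A) :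
    adjOne ψ (Function.update ψ a x) :=
  ⟨a, fun _ hv => (Function.update_of_ne hv _ _).symm⟩

/-- The path is returned without its endpoint `φ`, so that it is `[]` when `ψ = φ`. -/
lemma exists_adjOne_path (s : Finset V) (φ : V → A) :
    ∀ ψ : V → A, (∀ v ∉ s, ψ v = φ v) →
      ∃ m : List (V → A), (m ++ [φ]).head? = some ψ ∧ (m ++ [φ]).IsChain adjOne ∧
        ∀ χ ∈ m, ∀ v ∉ s, χ v = φ v := by
  classical
  induction s using Finset.induction_on with
  | empty =>
    intro ψ h
    exact ⟨[], by simp [funext fun v => h v (Finset.notMem_empty v)], by simp, by simp⟩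
  | insert a s _ ih =>
    intro ψ h
    have h' : ∀ v ∉ s, Function.update ψ a (φ a) v = φ v := by
      intro v hv
      by_cases hva : v = a
      · simp [hva]
      · simpa [hva] using h v (by simp [hva, hv])
    obtain ⟨m, hhead, hchain, hm⟩ := ih _ h'
    refine ⟨ψ :: m, rfl, ?_, ?_⟩
    · rw [List.cons_append, List.isChain_cons, hhead]
      simpa using ⟨adjOne_update ψ a (φ a), hchain⟩
    · rintro χ (_ | ⟨_, hχ⟩) v hv
      · exact h v hv
      · exact hm χ hχ v (fun hvs => hv (Finset.mem_insert_of_mem hvs))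

lemma exists_adjOne_refinement (k : ℕ) : ∀ l : List (V → A), l.IsChain (diffLe k) →
    ∃ L : List (V → A), L.head? = l.head? ∧ L.getLast? = l.getLast? ∧ L.IsChain adjOne ∧
      ∀ χ ∈ L, ∃ φ ∈ l, diffLe k χ φ
  | [], _ => ⟨[], rfl, rfl, .nil, by simp⟩
  | [ψ], _ => ⟨[ψ], rfl, rfl, .singleton ψ, by simpa using diffLe_refl k ψ⟩
  | ψ :: φ :: t, hl => by
    obtain ⟨⟨s, hs, hψφ⟩, ht⟩ := List.isChain_cons_cons.mp hl
    obtain ⟨L, hhead, hlast, hchain, hL⟩ := exists_adjOne_refinement k (φ :: t) ht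
    obtain ⟨L', rfl⟩ := List.head?_eq_some_iff.mp hhead
    obtain ⟨m, hmhead, hmchain, hm⟩ := exists_adjOne_path s φ ψ hψφ
    refine ⟨m ++ [φ] ++ L', ?_, ?_, hmchain.append_overlap hchain (List.cons_ne_nil _ _), ?_⟩
    · simpa using hmhead
    · rw [List.append_assoc, List.singleton_append,
        List.getLast?_append_of_ne_nil _ (List.cons_ne_nil _ _), hlast, List.getLast?_cons_cons]
    · intro χ hχ
      rcases List.mem_append.mp hχ with hχ | hχ
      · rcases List.mem_append.mp hχ with hχ | hχ
        · exact ⟨φ, by simp, s, hs, hm χ hχ⟩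
        · exact ⟨φ, by simp, List.mem_singleton.mp hχ ▸ diffLe_refl k φ⟩
      · obtain ⟨φ', hφ', hχφ'⟩ := hL χ (List.mem_cons_of_mem φ hχ)
        exact ⟨φ', List.mem_cons_of_mem ψ hφ', hχφ'⟩

end Sequences

lemma List.exists_mem_lt_of_foldr_min_lt {α : Type*} [LinearOrder α] {b c : α} :
    ∀ {xs : List α}, xs.foldr min b < c → b < c ∨ ∃ x ∈ xs, x < c
  | [], h => .inl h
  | x :: xs, h => by
    rcases min_lt_iff.mp h with hx | hxs
    · exact .inr ⟨x, List.mem_cons_self, hx⟩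
    · obtain hb | ⟨y, hy, hyc⟩ := exists_mem_lt_of_foldr_min_lt hxs
      · exact .inl hb
      · exact .inr ⟨y, List.mem_cons_of_mem x hy, hyc⟩

section Values

variable {V A ι : Type*} [Fintype ι] (sat : ι → (V → A) → Prop)

lemma valC_le_one (ψ : V → A) : valC sat ψ ≤ 1 := by
  unfold valC
  rw [← Nat.card_eq_fintype_card]
  exact div_le_one_of_le₀ (by exact_mod_cast Finite.card_subtype_le _) (Nat.cast_nonneg _)

lemma valSeqC_le_one (l : List (V → A)) : valSeqC sat l ≤ 1 := by
  induction l with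
  | nil => exact le_rfl
  | cons ψ l ih => exact min_le_of_right_le ih

lemma exists_mem_valC_lt_of_valSeqC_lt {l : List (V → A)} (hl : l ≠ []) {c : ℝ}
    (h : valSeqC sat l < c) : ∃ ψ ∈ l, valC sat ψ < c := by
  rcases List.exists_mem_lt_of_foldr_min_lt h with h1 | ⟨_, hx, hxc⟩
  · obtain ⟨ψ, hψ⟩ := List.exists_mem_of_ne_nil l hl
    exact ⟨ψ, hψ, (valC_le_one sat ψ).trans_lt h1⟩
  · obtain ⟨ψ, hψ, rfl⟩ := List.mem_map.mp hx
    exact ⟨ψ, hψ, hxc⟩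

lemma valSeqC_le_maxValC {ψi ψt : V → A} {l : List (V → A)} (hl : l ≠ [])
    (hhead : l.head? = some ψi) (hlast : l.getLast? = some ψt) (hchain : l.IsChain adjOne) :
    valSeqC sat l ≤ maxValC sat ψi ψt := by
  refine le_csSup ⟨1, ?_⟩ ⟨l, hl, hhead, hlast, hchain, rfl⟩
  rintro _ ⟨l', -, -, -, -, rfl⟩
  exact valSeqC_le_one sat l'

end Values

section ConstraintGraph

variable {V A ι : Type*}

abbrev edgeSat (he : ι → V × V) (hc : ι → Set (A × A)) (i : ι) (ψ : V → A) : Prop :=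
  (ψ (he i).1, ψ (he i).2) ∈ hc i

variable [Fintype ι] (he : ι → V × V) (hc : ι → Set (A × A)) {d : ℕ}

/-- Changing the assignment on `s` can only affect the edges incident to `s`. -/
lemma card_edgeSat_le_add (hdeg : ∀ v : V, Nat.card {i : ι // (he i).1 = v ∨ (he i).2 = v} ≤ d)
    {ψ φ : V → A} {s : Finset V} (h : ∀ v ∉ s, ψ v = φ v) :
    Nat.card {i // edgeSat he hc i φ} ≤ Nat.card {i // edgeSat he hc i ψ} + d * s.card := by
  classical
  set incident : V → Finset ι := fun v => {i | (he i).1 = v ∨ (he i).2 = v}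
  simp only [Nat.card_eq_fintype_card, Fintype.card_subtype] at hdeg ⊢
  have hsub : ({i | edgeSat he hc i φ} : Finset ι) ⊆
      ({i | edgeSat he hc i ψ} : Finset ι) ∪ s.biUnion incident := by
    intro i hi
    by_cases h1 : (he i).1 ∈ s
    · exact Finset.mem_union_right _ (Finset.mem_biUnion.mpr ⟨_, h1, by simp [incident]⟩)
    by_cases h2 : (he i).2 ∈ s
    · exact Finset.mem_union_right _ (Finset.mem_biUnion.mpr ⟨_, h2, by simp [incident]⟩)
    refine Finset.mem_union_left _ ?_
    simp only [Finset.mem_filter, Finset.mem_univ, true_and, edgeSat] at hi ⊢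
    rwa [h _ h1, h _ h2]
  have hincident : (s.biUnion incident).card ≤ d * s.card :=
    calc (s.biUnion incident).card ≤ ∑ v ∈ s, (incident v).card := Finset.card_biUnion_le
      _ ≤ ∑ _v ∈ s, d := Finset.sum_le_sum fun v _ => hdeg v
      _ = d * s.card := by rw [Finset.sum_const, smul_eq_mul, mul_comm]
  calc _ ≤ _ := Finset.card_le_card hsub
    _ ≤ _ := Finset.card_union_le _ _
    _ ≤ _ := Nat.add_le_add_left hincident _

lemma valC_edgeSat_le_add (hdeg : ∀ v : V, Nat.card {i : ι // (he i).1 = v ∨ (he i).2 = v} ≤ d)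
    {k : ℕ} {ψ φ : V → A} (h : diffLe k ψ φ) :
    valC (edgeSat he hc) φ ≤ valC (edgeSat he hc) ψ + (d * k : ℝ) / Fintype.card ι := by
  obtain ⟨s, hs, hψφ⟩ := h
  have hcard : Nat.card {i // edgeSat he hc i φ} ≤ Nat.card {i // edgeSat he hc i ψ} + d * k :=
    (card_edgeSat_le_add he hc hdeg hψφ).trans (by gcongr)
  unfold valC
  rw [← add_div]
  gcongr
  exact_mod_cast hcard

end ConstraintGraph

theorem interpolation_soundness_general {V A ι : Type*}
    [Fintype ι]
    (he : ι → V × V) (hc : ι → Set (A × A)) (d k : ℕ)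
    (hdeg : ∀ v : V, Nat.card {i : ι // (he i).1 = v ∨ (he i).2 = v} ≤ d)
    (ε : ℝ)
    (ψi ψt : V → A) (l : List (V → A))
    (hhead : l.head? = some ψi) (hlast : l.getLast? = some ψt)
    (hchain : l.Chain' (diffLe k))
    (hval : maxValC (fun i ψ => (ψ (he i).1, ψ (he i).2) ∈ hc i) ψi ψt < 1 - ε) :
    ∃ ψ ∈ l, valC (fun i ψ => (ψ (he i).1, ψ (he i).2) ∈ hc i) ψ
      < 1 - ε + ((d : ℝ) * (k : ℝ)) / (Fintype.card ι : ℝ) := by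
  obtain ⟨L, hLhead, hLlast, hLchain, hLnear⟩ := exists_adjOne_refinement k l hchain
  rw [hhead] at hLhead
  rw [hlast] at hLlast
  have hL : L ≠ [] := by rintro rfl; cases hLhead
  obtain ⟨χ, hχ, hχval⟩ := exists_mem_valC_lt_of_valSeqC_lt (edgeSat he hc) hL
    ((valSeqC_le_maxValC _ hL hLhead hLlast hLchain).trans_lt hval)
  obtain ⟨φ, hφ, hχφ⟩ := hLnear χ hχ
  exact ⟨φ, hφ, (valC_edgeSat_le_add he hc hdeg hχφ).trans_lt (by linarith)⟩

/-- in a constraint graph (edges indexed by `ι`, endpoints `he`, constraints `hc`,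
`E` nonempty) where every vertex lies on at most `d` edges, if a sequence of assignments from
`ψi` to `ψt` has consecutive assignments differing on at most `k ≥ 1` vertices and
`val_G(ψi ↭ ψt) < 1 − ε`, then some assignment in the sequence has value
less than `1 − ε + dk/|E|`. -/
theorem interpolation_soundness {V A ι : Type*} [Fintype V] [Fintype A]
    [Fintype ι] [Nonempty ι]
    (he : ι → V × V) (hc : ι → Set (A × A)) (d k : ℕ) (hk : 1 ≤ k)
    (hdeg : ∀ v : V, Nat.card {i : ι // (he i).1 = v ∨ (he i).2 = v} ≤ d)
    (ε : ℝ) (hε0 : 0 < ε) (hε1 : ε < 1)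
    (ψi ψt : V → A) (l : List (V → A)) (hl : l ≠ [])
    (hhead : l.head? = some ψi) (hlast : l.getLast? = some ψt)
    (hchain : l.Chain' (diffLe k))
    (hval : maxValC (fun i ψ => (ψ (he i).1, ψ (he i).2) ∈ hc i) ψi ψt < 1 - ε) :
    ∃ ψ ∈ l, valC (fun i ψ => (ψ (he i).1, ψ (he i).2) ∈ hc i) ψ
      < 1 - ε + ((d : ℝ) * (k : ℝ)) / (Fintype.card ι : ℝ) :=
  interpolation_soundness_general he hc d k hdeg ε ψi ψt l hhead hlast hchain hval
end

section
/- Let r ≥ 2 be an integer, R = 100r, let d ≥ 1 be an integer, and let λ be a real number with 0 < λ ≤ d/2. Let A be a real symmetric matrix indexed by a finite nonempty set V such that A·𝟙 = d·𝟙 (where 𝟙 is the all-ones vector) and λ(A) ≤ λ. Define A' = Σ_{k=1}^{R} (r−1)^{k−1} r^{R−k} d^{R−k} A^k and d' = (r^R − (r−1)^R)·d^R. Then A'·𝟙 = d'·𝟙 and λ(A') ≤ (4^100/100)·(λ/d)·d'. -/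
/-- For a real square matrix `M` indexed by a finite set `V`, `matLambda M` denotes
`sup {‖Mx‖₂ / ‖x‖₂ : x ∈ ℝ^V, x ≠ 0, ∑ v, x v = 0}`. -/
noncomputable def matLambda {V : Type*} [Fintype V] (M : Matrix V V ℝ) : ℝ :=
  sSup {r : ℝ | ∃ x : V → ℝ, x ≠ 0 ∧ (∑ v, x v) = 0 ∧
    r = Real.sqrt (∑ v, (M.mulVec x v) ^ 2) / Real.sqrt (∑ v, (x v) ^ 2)}

/-!
Write `A' = p(A)` with `p(t) = ∑ₖ cₖ tᵏ`, all `cₖ ≥ 0`. Since `A𝟙 = d𝟙`, `A'𝟙 = p(d)𝟙`, and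
`p(d) = d'` is a telescoping geometric sum. Symmetry makes `𝟙ᵀA = d𝟙ᵀ`, so `A` maps sum-zero
vectors to sum-zero vectors and shrinks them by `λ`; hence `‖A'x‖ ≤ p(λ)‖x‖` on them.
Finally `λ ≤ d/2` gives `p(λ) ≤ λ d^(R-1) r^R`, and Bernoulli's inequality
`(1 + 1/(r-1))^R ≥ 2` (valid as `R ≥ r - 1`) gives `r^R ≤ 2 (r^R - (r-1)^R)`,
so `p(λ) ≤ 2 (λ/d) d'`.
-/

open Finset Matrix

theorem geom_sum₂_Icc_mul {R : Type*} [CommRing R] (x y : R) (n : ℕ) :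
    (∑ k ∈ Icc 1 n, x ^ (k - 1) * y ^ (n - k)) * (x - y) = x ^ n - y ^ n := by
  rw [← geom_sum₂_mul, range_eq_Ico, ← Ico_add_one_right_eq_Icc, ← zero_add 1, ← sum_Ico_add']
  simp only [Nat.add_sub_cancel, Nat.sub_sub, Nat.add_comm 1]

lemma sum_Icc_pow_mul_pow_le {a b : ℝ} (ha : 0 ≤ a) (hab : a + 1 ≤ b) (n : ℕ) :
    ∑ k ∈ Icc 1 n, a ^ (k - 1) * b ^ (n - k) ≤ b ^ n := by
  have hS : 0 ≤ ∑ k ∈ Icc 1 n, a ^ (k - 1) * b ^ (n - k) :=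
    sum_nonneg fun k _ => mul_nonneg (pow_nonneg ha _) (pow_nonneg (by linarith) _)
  nlinarith [geom_sum₂_Icc_mul a b n, pow_nonneg ha n, mul_nonneg hS (sub_nonneg.2 hab)]

lemma two_mul_pow_le_add_one_pow {x : ℝ} (hx : 0 < x) {n : ℕ} (hn : x ≤ n) :
    2 * x ^ n ≤ (x + 1) ^ n := by
  have hbernoulli : 1 + n * x⁻¹ ≤ (1 + x⁻¹) ^ n :=
    one_add_mul_le_pow (by linarith [inv_pos.2 hx]) n
  have htwo : 2 ≤ 1 + n * x⁻¹ := by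
    rw [← div_eq_mul_inv]; linarith [(one_le_div hx).2 hn]
  calc 2 * x ^ n ≤ (1 + x⁻¹) ^ n * x ^ n := by gcongr; linarith
    _ = (x + 1) ^ n := by rw [← mul_pow, add_mul, one_mul, inv_mul_cancel₀ hx.ne', add_comm]

lemma sum_coeff_mul_pow_self (r d : ℝ) (R : ℕ) :
    ∑ k ∈ Icc 1 R, (r - 1) ^ (k - 1) * r ^ (R - k) * d ^ (R - k) * d ^ k
      = (r ^ R - (r - 1) ^ R) * d ^ R := by
  have hterm : ∀ k ∈ Icc 1 R, (r - 1) ^ (k - 1) * r ^ (R - k) * d ^ (R - k) * d ^ k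
      = (r - 1) ^ (k - 1) * r ^ (R - k) * d ^ R := by
    intro k hk
    rw [mul_assoc _ (d ^ _), ← pow_add, Nat.sub_add_cancel (mem_Icc.1 hk).2]
  rw [sum_congr rfl hterm, ← sum_mul]
  linear_combination (-d ^ R) * geom_sum₂_Icc_mul (r - 1) r R

section Coefficients

variable {r d lam : ℝ}

lemma coeff_mul_pow_le_of_le_half (hr : 1 ≤ r) (hlam0 : 0 ≤ lam) (hlam : lam ≤ d / 2) {R k : ℕ}
    (hk : k ∈ Icc 1 R) :
    (r - 1) ^ (k - 1) * r ^ (R - k) * d ^ (R - k) * lam ^ k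
      ≤ lam * d ^ (R - 1) * (((r - 1) / 2) ^ (k - 1) * r ^ (R - k)) := by
  obtain ⟨hk1, hkR⟩ := mem_Icc.1 hk
  have hd : 0 ≤ d := by linarith
  have hsplit : d ^ (R - 1) = d ^ (R - k) * d ^ (k - 1) := by rw [← pow_add]; congr 1; omega
  calc (r - 1) ^ (k - 1) * r ^ (R - k) * d ^ (R - k) * lam ^ k
      = (r - 1) ^ (k - 1) * r ^ (R - k) * d ^ (R - k) * (lam * lam ^ (k - 1)) := by
        rw [← pow_succ', Nat.sub_add_cancel hk1]
    _ ≤ (r - 1) ^ (k - 1) * r ^ (R - k) * d ^ (R - k) * (lam * (d / 2) ^ (k - 1)) := by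
        have : 0 ≤ r - 1 := by linarith
        gcongr
    _ = lam * d ^ (R - 1) * (((r - 1) / 2) ^ (k - 1) * r ^ (R - k)) := by
        rw [hsplit, div_pow, div_pow]; ring

lemma sum_coeff_mul_pow_le_of_le_half (hr : 1 ≤ r) (hlam0 : 0 ≤ lam) (hlam : lam ≤ d / 2)
    (R : ℕ) :
    ∑ k ∈ Icc 1 R, (r - 1) ^ (k - 1) * r ^ (R - k) * d ^ (R - k) * lam ^ k
      ≤ lam * d ^ (R - 1) * r ^ R := by
  have hd : 0 ≤ d := by linarith
  calc _ ≤ ∑ k ∈ Icc 1 R, lam * d ^ (R - 1) * (((r - 1) / 2) ^ (k - 1) * r ^ (R - k)) :=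
        sum_le_sum fun k hk => coeff_mul_pow_le_of_le_half hr hlam0 hlam hk
    _ = lam * d ^ (R - 1) * ∑ k ∈ Icc 1 R, ((r - 1) / 2) ^ (k - 1) * r ^ (R - k) :=
        (mul_sum _ _ _).symm
    _ ≤ lam * d ^ (R - 1) * r ^ R := by
        gcongr
        exact sum_Icc_pow_mul_pow_le (by linarith) (by linarith) R

lemma sum_coeff_mul_pow_le (hr : 1 < r) (hd : 0 < d) (hlam0 : 0 ≤ lam) (hlam : lam ≤ d / 2)
    {R : ℕ} (hR : r - 1 ≤ R) :
    ∑ k ∈ Icc 1 R, (r - 1) ^ (k - 1) * r ^ (R - k) * d ^ (R - k) * lam ^ k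
      ≤ 2 * (lam / d) * ((r ^ R - (r - 1) ^ R) * d ^ R) := by
  have hgap : 2 * (r - 1) ^ R ≤ r ^ R := by
    simpa using two_mul_pow_le_add_one_pow (sub_pos.2 hr) hR
  have hR0 : R ≠ 0 := by
    have : (0 : ℝ) < R := (sub_pos.2 hr).trans_le hR
    exact_mod_cast this.ne'
  calc _ ≤ lam * d ^ (R - 1) * r ^ R := sum_coeff_mul_pow_le_of_le_half hr.le hlam0 hlam R
    _ ≤ lam * d ^ (R - 1) * (2 * (r ^ R - (r - 1) ^ R)) := by gcongr; linarith
    _ = 2 * (lam / d) * ((r ^ R - (r - 1) ^ R) * d ^ R) := by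
        rw [← pow_sub_one_mul hR0 d]; field_simp

end Coefficients

section RegularMatrix

variable {n R : Type*} [Fintype n] [CommSemiring R] {A : Matrix n n R} {c : R}

lemma pow_mulVec_const [DecidableEq n] (h : A *ᵥ (fun _ => 1) = fun _ => c) (k : ℕ) :
    (A ^ k) *ᵥ (fun _ => 1) = fun _ => c ^ k := by
  induction k with
  | zero => funext; simp
  | succ k ih =>
    have hconst : (fun _ : n => c ^ k) = c ^ k • fun _ => 1 := by funext; simp
    rw [pow_succ', ← mulVec_mulVec, ih, hconst, mulVec_smul, h]
    funext; simp [pow_succ]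

lemma sum_smul_pow_mulVec_const [DecidableEq n] (h : A *ᵥ (fun _ => 1) = fun _ => c)
    (s : Finset ℕ) (a : ℕ → R) :
    (∑ k ∈ s, a k • A ^ k) *ᵥ (fun _ => 1) = fun _ => ∑ k ∈ s, a k * c ^ k := by
  funext i
  simp [sum_mulVec, smul_mulVec, pow_mulVec_const h]

lemma sum_mulVec_of_isSymm (hA : A.IsSymm) (h : A *ᵥ (fun _ => 1) = fun _ => c) (x : n → R) :
    ∑ i, (A *ᵥ x) i = c * ∑ i, x i := by
  calc ∑ i, (A *ᵥ x) i = 1 ⬝ᵥ (A *ᵥ x) := (one_dotProduct _).symm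
    _ = (1 ᵥ* Aᵀ) ⬝ᵥ x := by rw [dotProduct_mulVec, hA.eq]
    _ = c * ∑ i, x i := by
        rw [vecMul_transpose]
        change (A *ᵥ fun _ => 1) ⬝ᵥ x = _
        rw [h]; simp [dotProduct, mul_sum]

end RegularMatrix

section PowerBound

variable {𝕜 E : Type*} [NormedField 𝕜] [SeminormedAddCommGroup E] [NormedSpace 𝕜 E]
  {T : E →L[𝕜] E} {S : Set E} {c : ℝ}

lemma norm_pow_apply_le (hS : Set.MapsTo T S S) (hT : ∀ x ∈ S, ‖T x‖ ≤ c * ‖x‖) (hc : 0 ≤ c)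
    (k : ℕ) {x : E} (hx : x ∈ S) : ‖(T ^ k) x‖ ≤ c ^ k * ‖x‖ := by
  induction k generalizing x with
  | zero => simp
  | succ k ih =>
    calc ‖(T ^ (k + 1)) x‖ = ‖(T ^ k) (T x)‖ := by rw [pow_succ]; rfl
      _ ≤ c ^ k * ‖T x‖ := ih (hS hx)
      _ ≤ c ^ k * (c * ‖x‖) := by gcongr; exact hT x hx
      _ = c ^ (k + 1) * ‖x‖ := by ring

lemma norm_sum_smul_pow_apply_le (hS : Set.MapsTo T S S) (hT : ∀ x ∈ S, ‖T x‖ ≤ c * ‖x‖)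
    (hc : 0 ≤ c) (s : Finset ℕ) (a : ℕ → 𝕜) {x : E} (hx : x ∈ S) :
    ‖(∑ k ∈ s, a k • T ^ k) x‖ ≤ (∑ k ∈ s, ‖a k‖ * c ^ k) * ‖x‖ := by
  rw [_root_.sum_apply, sum_mul]
  refine (norm_sum_le _ _).trans (sum_le_sum fun k _ => ?_)
  rw [_root_.smul_apply, norm_smul, mul_assoc]
  gcongr
  exact norm_pow_apply_le hS hT hc k hx

end PowerBound

section MatLambda

variable {V : Type*} [Fintype V] [DecidableEq V]

lemma matLambda_eq_sSup (M : Matrix V V ℝ) :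
    matLambda M = sSup {s : ℝ | ∃ x : EuclideanSpace ℝ V, x ≠ 0 ∧ ∑ v, x v = 0 ∧
      s = ‖toEuclideanCLM (𝕜 := ℝ) M x‖ / ‖x‖} := by
  simp only [matLambda, EuclideanSpace.norm_eq, Real.norm_eq_abs, sq_abs]
  congr 1; ext s
  exact (WithLp.equiv 2 (V → ℝ)).symm.exists_congr_left.trans (by simp)

lemma matLambda_le_iff {M : Matrix V V ℝ} {c : ℝ} (hc : 0 ≤ c) :
    matLambda M ≤ c ↔
      ∀ x : EuclideanSpace ℝ V, ∑ v, x v = 0 → ‖toEuclideanCLM (𝕜 := ℝ) M x‖ ≤ c * ‖x‖ := by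
  rw [matLambda_eq_sSup]
  have hbdd : BddAbove {s : ℝ | ∃ x : EuclideanSpace ℝ V, x ≠ 0 ∧ ∑ v, x v = 0 ∧
      s = ‖toEuclideanCLM (𝕜 := ℝ) M x‖ / ‖x‖} := by
    refine ⟨‖toEuclideanCLM (𝕜 := ℝ) M‖, ?_⟩
    rintro _ ⟨x, -, -, rfl⟩
    exact div_le_of_le_mul₀ (norm_nonneg _) (norm_nonneg _) (ContinuousLinearMap.le_opNorm _ _)
  constructor
  · intro h x hx
    rcases eq_or_ne x 0 with rfl | hx0
    · simp
    · have := (le_csSup hbdd ⟨x, hx0, hx, rfl⟩).trans h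
      rwa [div_le_iff₀ (norm_pos_iff.2 hx0)] at this
  · intro h
    refine Real.sSup_le ?_ hc
    rintro _ ⟨x, hx0, hx, rfl⟩
    rw [div_le_iff₀ (norm_pos_iff.2 hx0)]
    exact h x hx

lemma matLambda_sum_smul_pow_le {A : Matrix V V ℝ} {d lam : ℝ} (hsymm : A.IsSymm)
    (hreg : A *ᵥ (fun _ => 1) = fun _ => d) (hA : matLambda A ≤ lam) (hlam : 0 ≤ lam)
    (s : Finset ℕ) (a : ℕ → ℝ) :
    matLambda (∑ k ∈ s, a k • A ^ k) ≤ ∑ k ∈ s, |a k| * lam ^ k := by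
  have hmaps : Set.MapsTo (toEuclideanCLM (𝕜 := ℝ) A) {x | ∑ v, x v = 0} {x | ∑ v, x v = 0} :=
    fun x (hx : ∑ v, x v = 0) => by
      change ∑ v, (A *ᵥ x.ofLp) v = 0
      rw [sum_mulVec_of_isSymm hsymm hreg, hx, mul_zero]
  rw [matLambda_le_iff (by positivity)]
  intro x hx
  simpa only [map_sum, map_smul, map_pow, Real.norm_eq_abs] using
    norm_sum_smul_pow_apply_le hmaps ((matLambda_le_iff hlam).1 hA) hlam s a hx

end MatLambda

theorem powered_matrix_general {V : Type*} [Fintype V] [DecidableEq V]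
    (r d : ℕ) (hr : 2 ≤ r) (hd : 1 ≤ d)
    (lam : ℝ) (hlam0 : 0 < lam) (hlam : lam ≤ (d : ℝ) / 2)
    (A : Matrix V V ℝ) (hsymm : A.IsSymm)
    (hreg : A.mulVec (fun _ => (1 : ℝ)) = fun _ => (d : ℝ))
    (hA : matLambda A ≤ lam) :
    (∑ k ∈ Finset.Icc 1 (100 * r),
        (((r : ℝ) - 1) ^ (k - 1) * (r : ℝ) ^ (100 * r - k) * (d : ℝ) ^ (100 * r - k)) •
          A ^ k).mulVec (fun _ => (1 : ℝ))
      = (fun _ => ((r : ℝ) ^ (100 * r) - ((r : ℝ) - 1) ^ (100 * r)) * (d : ℝ) ^ (100 * r)) ∧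
    matLambda (∑ k ∈ Finset.Icc 1 (100 * r),
        (((r : ℝ) - 1) ^ (k - 1) * (r : ℝ) ^ (100 * r - k) * (d : ℝ) ^ (100 * r - k)) • A ^ k)
      ≤ (4 ^ 100 / 100) * (lam / (d : ℝ)) *
        (((r : ℝ) ^ (100 * r) - ((r : ℝ) - 1) ^ (100 * r)) * (d : ℝ) ^ (100 * r)) := by
  have hd0 : (0 : ℝ) < d := by exact_mod_cast hd
  have hr1 : (1 : ℝ) < r := by exact_mod_cast hr
  have hd'_nonneg : 0 ≤ ((r : ℝ) ^ (100 * r) - ((r : ℝ) - 1) ^ (100 * r)) * (d : ℝ) ^ (100 * r) :=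
    mul_nonneg (sub_nonneg.2 (pow_le_pow_left₀ (by linarith) (by linarith) _)) (by positivity)
  constructor
  · rw [sum_smul_pow_mulVec_const hreg]
    exact funext fun _ => sum_coeff_mul_pow_self _ _ _
  · refine (matLambda_sum_smul_pow_le hsymm hreg hA hlam0.le _ _).trans ?_
    simp only [abs_mul, abs_pow, Nat.abs_cast, abs_of_nonneg (sub_nonneg.2 hr1.le)]
    refine (sum_coeff_mul_pow_le hr1 hd0 hlam0.le hlam (by push_cast; linarith)).trans ?_
    gcongr
    norm_num

/-- let `r ≥ 2`, `R = 100r`, `d ≥ 1`, `0 < λ ≤ d/2`, and let `A` be a real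
symmetric matrix with `A·𝟙 = d·𝟙` and `λ(A) ≤ λ`.  With
`A' = ∑_{k=1}^{R} (r−1)^{k−1} r^{R−k} d^{R−k} A^k` and `d' = (r^R − (r−1)^R)·d^R`,
we have `A'·𝟙 = d'·𝟙` and `λ(A') ≤ (4^100/100)·(λ/d)·d'`. -/
theorem powered_matrix {V : Type*} [Fintype V] [DecidableEq V] [Nonempty V]
    (r d : ℕ) (hr : 2 ≤ r) (hd : 1 ≤ d)
    (lam : ℝ) (hlam0 : 0 < lam) (hlam : lam ≤ (d : ℝ) / 2)
    (A : Matrix V V ℝ) (hsymm : A.IsSymm)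
    (hreg : A.mulVec (fun _ => (1 : ℝ)) = fun _ => (d : ℝ))
    (hA : matLambda A ≤ lam) :
    (∑ k ∈ Finset.Icc 1 (100 * r),
        (((r : ℝ) - 1) ^ (k - 1) * (r : ℝ) ^ (100 * r - k) * (d : ℝ) ^ (100 * r - k)) •
          A ^ k).mulVec (fun _ => (1 : ℝ))
      = (fun _ => ((r : ℝ) ^ (100 * r) - ((r : ℝ) - 1) ^ (100 * r)) * (d : ℝ) ^ (100 * r)) ∧
    matLambda (∑ k ∈ Finset.Icc 1 (100 * r),
        (((r : ℝ) - 1) ^ (k - 1) * (r : ℝ) ^ (100 * r - k) * (d : ℝ) ^ (100 * r - k)) • A ^ k)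
      ≤ (4 ^ 100 / 100) * (lam / (d : ℝ)) *
        (((r : ℝ) ^ (100 * r) - ((r : ℝ) - 1) ^ (100 * r)) * (d : ℝ) ^ (100 * r)) :=
  powered_matrix_general r d hr hd lam hlam0 hlam A hsymm hreg hA
end

section
/- Let G = (V, E, Σ, Π) be a constraint graph and let C ⊆ V × Σ be a cover of the Lund–Yannakakis system. Then for every edge e = (v,w) ∈ E there exist α ∈ L_v(C) and β ∈ L_w(C) with (α, β) ∈ π_e. In particular, if every vertex of V lies on at least one edge, then L_v(C) ≠ ∅ for every v ∈ V. -/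
/-!
Fix an edge `e = (v, w)` and the point `(e, q)` of the universe whose second coordinate `q` is the
indicator of `L_v(C)`. No `S_{v,α}` with `α ∈ L_v(C)` contains it through its first clause, since
that clause asks `q_α = 0`. So it is covered through the second clause by some `S_{w,β}` with
`β ∈ L_w(C)`, which provides `γ` with `q_γ = 1`, i.e. `γ ∈ L_v(C)`, and `(γ, β) ∈ π_e`.
-/

/-- The Lund–Yannakakis set `S_{v,α}` in the universe `E × B` (with `B = {0,1}^Σ` modeled as
`A → Bool`): the union of `{e} × Q̄_α` over edges `e ∈ E` with first endpoint `v`, together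
with `{e} × Q_{π_e⁻¹(α)}` over edges `e ∈ E` with second endpoint `v`. -/
def LYSet {V A : Type*} (E : Finset (V × V)) (π : V × V → Set (A × A)) (v : V) (α : A) :
    Set ((V × V) × (A → Bool)) :=
  {p | p.1 ∈ E ∧ ((p.1.1 = v ∧ p.2 α = false) ∨
    (p.1.2 = v ∧ ∃ γ, (γ, α) ∈ π p.1 ∧ p.2 γ = true))}

/-- `C ⊆ V × Σ` is a cover of the Lund–Yannakakis system: the sets `S_{v,α}` for
`(v, α) ∈ C` cover the universe `E × B`. -/
def IsLYCover {V A : Type*} (E : Finset (V × V)) (π : V × V → Set (A × A))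
    (C : Finset (V × A)) : Prop :=
  ∀ p : (V × V) × (A → Bool), p.1 ∈ E → ∃ va ∈ C, p ∈ LYSet E π va.1 va.2

section

variable {V A : Type*} {E : Finset (V × V)} {π : V × V → Set (A × A)} {C : Finset (V × A)}

theorem eq_snd_and_exists_label_of_mem_LYSet {e : V × V} {q : A → Bool}
    (hq : ∀ γ, q γ = true ↔ (e.1, γ) ∈ C) {u : V} {β : A} (huβ : (u, β) ∈ C)
    (h : (e, q) ∈ LYSet E π u β) :
    u = e.2 ∧ ∃ γ, (e.1, γ) ∈ C ∧ (γ, β) ∈ π e := by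
  obtain ⟨-, ⟨rfl, hβ⟩ | ⟨rfl, γ, hγβ, hγ⟩⟩ := h
  · exact absurd ((hq β).2 huβ) (Bool.eq_false_iff.mp hβ)
  · exact ⟨rfl, γ, (hq γ).1 hγ, hγβ⟩

theorem IsLYCover.exists_satisfying_labels (hC : IsLYCover E π C) {e : V × V} (he : e ∈ E) :
    ∃ α β : A, (e.1, α) ∈ C ∧ (e.2, β) ∈ C ∧ (α, β) ∈ π e := by
  classical
  obtain ⟨⟨u, β⟩, huβ, hmem⟩ := hC (e, fun γ => decide ((e.1, γ) ∈ C)) he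
  obtain ⟨rfl, γ, hγ, hγβ⟩ :=
    eq_snd_and_exists_label_of_mem_LYSet (fun γ => decide_eq_true_iff) huβ hmem
  exact ⟨γ, β, hγ, huβ, hγβ⟩

end

/-- if `C` is a cover of the Lund–Yannakakis system then every edge
`e = (v, w) ∈ E` is satisfied by some `α ∈ L_v(C)` and `β ∈ L_w(C)`; in particular, if
every vertex lies on at least one edge then `L_v(C) ≠ ∅` for every `v`. -/
theorem cover_yields_satisfied_edges {V A : Type*}
    (E : Finset (V × V)) (π : V × V → Set (A × A)) (C : Finset (V × A))
    (hC : IsLYCover E π C) :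
    (∀ e ∈ E, ∃ α β : A, (e.1, α) ∈ C ∧ (e.2, β) ∈ C ∧ (α, β) ∈ π e) ∧
    ((∀ v : V, ∃ e ∈ E, e.1 = v ∨ e.2 = v) → ∀ v : V, ∃ α, (v, α) ∈ C) := by
  refine ⟨fun e he => hC.exists_satisfying_labels he, fun hcovered v => ?_⟩
  obtain ⟨e, he, hv⟩ := hcovered v
  obtain ⟨α, β, hα, hβ, -⟩ := hC.exists_satisfying_labels he
  rcases hv with rfl | rfl
  exacts [⟨α, hα⟩, ⟨β, hβ⟩]
end

section
/- Let G = (V, E, Σ, Π) be a constraint graph in which every vertex lies on at least one edge. If ψ : V → Σ is a satisfying assignment for G, then C_ψ = {(v, ψ(v)) : v ∈ V} is a cover of the Lund–Yannakakis system with |C_ψ| = |V|; moreover, every cover C ⊆ V × Σ satisfies |C| ≥ |V|. Consequently, if G is satisfiable, the minimum size of a cover equals |V|. -/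
/-!
A satisfying assignment `ψ` covers every point `(e, q)` with `e = (u, w)`: either
`q_{ψ u} = 0`, so `(e, q) ∈ S_{u, ψ u}`, or `q_{ψ u} = 1` and `(ψ u, ψ w) ∈ π_e` put
`(e, q)` in `S_{w, ψ w}`. Conversely, over an edge `e = (v, w)` the point `(e, 0)` lies only
in sets `S_{v, α}`, and over an edge `e = (u, v)` the point `(e, 1)` lies only in sets
`S_{v, α}`; so a cover meets the fibre `{v} × Σ` of every vertex on an edge, and has at least
`|V|` elements when every vertex is on an edge.
-/

section LundYannakakis

variable {V A : Type*} {E : Finset (V × V)} {π : V × V → Set (A × A)}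

theorem isLYCover_image_of_satisfies [Fintype V] [DecidableEq V] [DecidableEq A] {ψ : V → A}
    (hψ : ∀ e ∈ E, (ψ e.1, ψ e.2) ∈ π e) :
    IsLYCover E π (Finset.univ.image fun v => (v, ψ v)) := by
  intro p hp
  cases hq : p.2 (ψ p.1.1)
  · exact ⟨(p.1.1, ψ p.1.1), Finset.mem_image_of_mem _ (Finset.mem_univ _), hp,
      Or.inl ⟨rfl, hq⟩⟩
  · exact ⟨(p.1.2, ψ p.1.2), Finset.mem_image_of_mem _ (Finset.mem_univ _), hp,
      Or.inr ⟨rfl, ψ p.1.1, hψ p.1 hp, hq⟩⟩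

theorem IsLYCover.exists_mem_of_fst_eq {C : Finset (V × A)} (hC : IsLYCover E π C)
    {e : V × V} (he : e ∈ E) {v : V} (hv : e.1 = v) : ∃ α, (v, α) ∈ C := by
  obtain ⟨⟨w, α⟩, hwα, -, hmem⟩ := hC (e, fun _ => false) he
  rcases hmem with ⟨rfl, -⟩ | ⟨-, _, -, hfalse⟩
  · exact ⟨α, hv ▸ hwα⟩
  · exact Bool.noConfusion hfalse

theorem IsLYCover.exists_mem_of_snd_eq {C : Finset (V × A)} (hC : IsLYCover E π C)
    {e : V × V} (he : e ∈ E) {v : V} (hv : e.2 = v) : ∃ α, (v, α) ∈ C := by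
  obtain ⟨⟨w, α⟩, hwα, -, hmem⟩ := hC (e, fun _ => true) he
  rcases hmem with ⟨-, htrue⟩ | ⟨rfl, -⟩
  · exact Bool.noConfusion htrue
  · exact ⟨α, hv ▸ hwα⟩

theorem IsLYCover.card_le [Fintype V] [DecidableEq V] {C : Finset (V × A)}
    (hC : IsLYCover E π C) (hdeg : ∀ v : V, ∃ e ∈ E, e.1 = v ∨ e.2 = v) :
    Fintype.card V ≤ C.card := by
  have hfst : Finset.univ ⊆ C.image Prod.fst := fun v _ => by
    obtain ⟨α, hα⟩ : ∃ α, (v, α) ∈ C := by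
      obtain ⟨e, he, hv | hv⟩ := hdeg v
      exacts [hC.exists_mem_of_fst_eq he hv, hC.exists_mem_of_snd_eq he hv]
    exact Finset.mem_image_of_mem Prod.fst hα
  calc Fintype.card V = Finset.univ.card := Finset.card_univ.symm
    _ ≤ (C.image Prod.fst).card := Finset.card_le_card hfst
    _ ≤ C.card := Finset.card_image_le

end LundYannakakis

/-- if every vertex lies on at least one edge and `ψ` is a satisfying
assignment, then `C_ψ = {(v, ψ(v)) : v ∈ V}` is a cover of the Lund–Yannakakis system of
size `|V|`, every cover has size at least `|V|`, and the minimum size of a cover is `|V|`. -/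
theorem satisfying_assignment_min_cover {V A : Type*} [Fintype V] [DecidableEq V]
    [DecidableEq A]
    (E : Finset (V × V)) (π : V × V → Set (A × A))
    (hdeg : ∀ v : V, ∃ e ∈ E, e.1 = v ∨ e.2 = v)
    (ψ : V → A) (hψ : ∀ e ∈ E, (ψ e.1, ψ e.2) ∈ π e) :
    IsLYCover E π (Finset.univ.image fun v => (v, ψ v)) ∧
    (Finset.univ.image fun v => (v, ψ v)).card = Fintype.card V ∧
    (∀ C : Finset (V × A), IsLYCover E π C → Fintype.card V ≤ C.card) ∧
    IsLeast {n : ℕ | ∃ C : Finset (V × A), IsLYCover E π C ∧ C.card = n}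
      (Fintype.card V) := by
  have hcover := isLYCover_image_of_satisfies hψ
  have hcard : (Finset.univ.image fun v => (v, ψ v)).card = Fintype.card V :=
    Finset.card_image_of_injective _ (Function.LeftInverse.injective (g := Prod.fst) fun _ => rfl)
  refine ⟨hcover, hcard, fun C hC => hC.card_le hdeg, ⟨_, hcover, hcard⟩, ?_⟩
  rintro n ⟨C, hC, rfl⟩
  exact hC.card_le hdeg
end

section
/- Let ε ∈ (0,1), let d ≥ 1 be an integer and λ > 0 a real with λ/d ≤ ε/3, and let G = (V, E, Σ, Π) be a constraint graph whose underlying graph is d-regular and with |V| ≥ d²/λ². For every cover C ⊆ V × Σ of the Lund–Yannakakis system with |C| ≤ (2 − ε)(|V| + 1), the set S = {v ∈ V : |L_v(C)| = 1} satisfies |S| ≥ (1 − λ/d)·ε·|V|. -/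
open Finset

abbrev labelSet {V A : Type*} [Fintype A] [DecidableEq V] [DecidableEq A]
    (C : Finset (V × A)) (v : V) : Finset A :=
  {a | (v, a) ∈ C}

section Cover

variable {V A : Type*} {E : Finset (V × V)} {π : V × V → Set (A × A)} {C : Finset (V × A)}

theorem IsLYCover.exists_mem_fst (hC : IsLYCover E π C) {e : V × V} (he : e ∈ E) :
    ∃ α, (e.1, α) ∈ C := by
  obtain ⟨⟨u, α⟩, hmem, _, hu | ⟨_, _, _, ⟨⟩⟩⟩ := hC (e, fun _ => false) he
  exact ⟨α, hu.1 ▸ hmem⟩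

theorem IsLYCover.exists_mem_snd (hC : IsLYCover E π C) {e : V × V} (he : e ∈ E) :
    ∃ α, (e.2, α) ∈ C := by
  obtain ⟨⟨u, α⟩, hmem, _, ⟨_, ⟨⟩⟩ | ⟨hu, _⟩⟩ := hC (e, fun _ => true) he
  exact ⟨α, hu ▸ hmem⟩

theorem IsLYCover.labelSet_nonempty [Fintype A] [DecidableEq V] [DecidableEq A]
    (hC : IsLYCover E π C) {v : V} (hv : (E.filter fun e => e.1 = v ∨ e.2 = v).Nonempty) :
    (labelSet C v).Nonempty := by
  obtain ⟨e, he⟩ := hv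
  obtain ⟨he, h1 | h2⟩ := mem_filter.mp he
  · obtain ⟨α, hα⟩ := hC.exists_mem_fst he
    exact ⟨α, by simpa [h1] using hα⟩
  · obtain ⟨α, hα⟩ := hC.exists_mem_snd he
    exact ⟨α, by simpa [h2] using hα⟩

end Cover

theorem sum_card_labelSet {V A : Type*} [Fintype V] [Fintype A] [DecidableEq V] [DecidableEq A]
    (C : Finset (V × A)) : ∑ v, #(labelSet C v) = #C := by
  simp only [labelSet, card_filter]
  rw [← Fintype.sum_prod_type', ← card_filter, filter_mem_eq_inter, univ_inter]

theorem two_mul_card_le_sum_add_card_filter_eq_one {ι : Type*} [Fintype ι] (f : ι → ℕ)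
    (hf : ∀ i, 1 ≤ f i) : 2 * Fintype.card ι ≤ ∑ i, f i + #{i | f i = 1} := by
  rw [card_filter, ← sum_add_distrib, Fintype.card_eq_sum_ones, mul_sum]
  refine sum_le_sum fun i _ => ?_
  have := hf i
  split_ifs <;> omega

theorem three_le_mul_div_mul {ε d lam n : ℝ} (hd : 0 < d) (hlam0 : 0 < lam)
    (hlam : lam / d ≤ ε / 3) (hV : d ^ 2 / lam ^ 2 ≤ n) : 3 ≤ ε * (lam / d * n) := by
  have hε : 0 ≤ ε := by linarith [div_pos hlam0 hd]
  calc (3 : ℝ) ≤ ε * (d / lam) := by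
        rw [div_le_div_iff₀ hd (by norm_num)] at hlam
        rw [← mul_div_assoc, le_div_iff₀ hlam0]
        linarith
    _ = ε * (lam / d * (d ^ 2 / lam ^ 2)) := by field_simp
    _ ≤ ε * (lam / d * n) := by gcongr

theorem singleton_vertices_lower_bound_general {V A : Type*} [Fintype V] [DecidableEq V]
    [Fintype A] [DecidableEq A]
    (E : Finset (V × V)) (π : V × V → Set (A × A))
    (ε : ℝ) (hε0 : 0 < ε)
    (d : ℕ) (hd : 1 ≤ d) (lam : ℝ) (hlam0 : 0 < lam) (hlam : lam / (d : ℝ) ≤ ε / 3)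
    (hreg : ∀ v : V, (E.filter fun e => e.1 = v ∨ e.2 = v).card = d)
    (hV : ((d : ℝ) ^ 2) / lam ^ 2 ≤ (Fintype.card V : ℝ))
    (C : Finset (V × A)) (hC : IsLYCover E π C)
    (hCcard : (C.card : ℝ) ≤ (2 - ε) * ((Fintype.card V : ℝ) + 1)) :
    (1 - lam / (d : ℝ)) * ε * (Fintype.card V : ℝ)
      ≤ ((Finset.univ.filter fun v : V =>
            (Finset.univ.filter fun a : A => (v, a) ∈ C).card = 1).card : ℝ) := by
  have hlabels : ∀ v, 1 ≤ #(labelSet C v) := fun v =>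
    card_pos.mpr <| hC.labelSet_nonempty <| card_pos.mp <| (hreg v).symm ▸ hd
  have hcount : 2 * (Fintype.card V : ℝ) ≤ #C + #{v | #(labelSet C v) = 1} := by
    exact_mod_cast sum_card_labelSet C ▸ two_mul_card_le_sum_add_card_filter_eq_one _ hlabels
  have hloss := three_le_mul_div_mul (by exact_mod_cast hd) hlam0 hlam hV
  linarith

/-- let `ε ∈ (0,1)`, `d ≥ 1`, `λ > 0` with `λ/d ≤ ε/3`, and let the underlying
graph be `d`-regular with `|V| ≥ d²/λ²`.  For every cover `C` of the Lund–Yannakakis system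
with `|C| ≤ (2 − ε)(|V| + 1)`, the set `S = {v : |L_v(C)| = 1}` satisfies
`|S| ≥ (1 − λ/d)·ε·|V|`. -/
theorem singleton_vertices_lower_bound {V A : Type*} [Fintype V] [DecidableEq V]
    [Fintype A] [DecidableEq A]
    (E : Finset (V × V)) (π : V × V → Set (A × A))
    (ε : ℝ) (hε0 : 0 < ε) (hε1 : ε < 1)
    (d : ℕ) (hd : 1 ≤ d) (lam : ℝ) (hlam0 : 0 < lam) (hlam : lam / (d : ℝ) ≤ ε / 3)
    (hreg : ∀ v : V, (E.filter fun e => e.1 = v ∨ e.2 = v).card = d)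
    (hV : ((d : ℝ) ^ 2) / lam ^ 2 ≤ (Fintype.card V : ℝ))
    (C : Finset (V × A)) (hC : IsLYCover E π C)
    (hCcard : (C.card : ℝ) ≤ (2 - ε) * ((Fintype.card V : ℝ) + 1)) :
    (1 - lam / (d : ℝ)) * ε * (Fintype.card V : ℝ)
      ≤ ((Finset.univ.filter fun v : V =>
            (Finset.univ.filter fun a : A => (v, a) ∈ C).card = 1).card : ℝ) :=
  singleton_vertices_lower_bound_general E π ε hε0 d hd lam hlam0 hlam hreg hV C hC hCcard
end

section
/- In the 2-CSP-to-4-CSP construction: let ε ∈ (0,1); if val_G(ψ) < 1 − ε for every assignment ψ : V → Σ, then val_{G'}(ψ'^ini ↭ ψ'^tar) < 1 − ε. -/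
/-!
Along a reconfiguration sequence from the constant-`a` to the constant-`b` assignment the value
at `x` changes, while a single step cannot change it as long as `x` and `y` agree before and
after the step. Hence some assignment `ψ'` of the sequence has `ψ' x ≠ ψ' y`; there the fresh
disjunct is false, so `ψ'` satisfies exactly the hyperedges whose original edge is satisfied by
the restriction of `ψ'` to `V`, and its value is less than `1 - ε`. Since `val_G` takes finitely
many values, the bound is uniform over all sequences.
-/

section Value

variable {V A ι : Type*} [Fintype ι]

theorem valC_nonneg (sat : ι → (V → A) → Prop) (ψ : V → A) : 0 ≤ valC sat ψ := by
  unfold valC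
  positivity

theorem finite_range_valC (sat : ι → (V → A) → Prop) : (Set.range (valC sat)).Finite := by
  refine (Set.finite_range fun k : Fin (Fintype.card ι + 1) => (k : ℝ) / Fintype.card ι).subset ?_
  rintro _ ⟨ψ, rfl⟩
  refine ⟨⟨Nat.card {i // sat i ψ}, Nat.lt_succ_of_le ?_⟩, rfl⟩
  simpa only [Nat.card_eq_fintype_card] using Finite.card_subtype_le (sat · ψ)

theorem valC_or_of_not {sat : ι → (V → A) → Prop} {q : (V → A) → Prop} {ψ : V → A}
    (hq : ¬q ψ) : valC (fun i ψ => sat i ψ ∨ q ψ) ψ = valC sat ψ := by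
  simp only [valC, or_iff_left hq]

theorem valSeqC_le_of_mem {sat : ι → (V → A) → Prop} {ψ : V → A} :
    ∀ {l : List (V → A)}, ψ ∈ l → valSeqC sat l ≤ valC sat ψ
  | _ :: _, .head _ => min_le_left _ _
  | _ :: _, .tail _ h => (min_le_right _ _).trans (valSeqC_le_of_mem h)

end Value

section Reconfiguration

variable {V A : Type*} {x y : V}

theorem adjOne.apply_eq_of_apply_eq_apply {ψ φ : V → A} (h : adjOne ψ φ) (hxy : x ≠ y)
    (hψ : ψ x = ψ y) (hφ : φ x = φ y) : ψ x = φ x := by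
  obtain ⟨v, hv⟩ := h
  by_cases hx : x = v
  · subst hx
    rw [hψ, hv y hxy.symm, hφ]
  · exact hv x hx

theorem exists_apply_ne_of_isChain_adjOne {l : List (V → A)} {ψ φ : V → A}
    (hl : l.IsChain adjOne) (hhead : l.head? = some ψ) (hlast : l.getLast? = some φ)
    (hψφ : ψ x ≠ φ x) (hxy : x ≠ y) : ∃ χ ∈ l, χ x ≠ χ y := by
  by_contra! hconst
  have hmem : ∀ χ ∈ l, χ x = ψ x :=
    (List.IsChain.iff_mem.mp hl).induction (fun χ => χ x = ψ x) l
      (fun χ₁ χ₂ ⟨h₁, h₂, hadj⟩ hχ₁ =>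
        (hadj.apply_eq_of_apply_eq_apply hxy (hconst χ₁ h₁) (hconst χ₂ h₂)).symm.trans hχ₁)
      (fun hne => by rw [List.head?_eq_some_head hne, Option.some.injEq] at hhead; rw [hhead])
  exact hψφ (hmem φ (List.mem_of_getLast? hlast)).symm

end Reconfiguration

theorem two_to_four_soundness_general {V A ι : Type*}
    [Fintype ι]
    (he : ι → V × V) (hc : ι → Set (A × A)) (a b : A) (hab : a ≠ b)
    (ε : ℝ)
    (h : ∀ ψ : V → A, valC (fun i ψ => (ψ (he i).1, ψ (he i).2) ∈ hc i) ψ < 1 - ε) :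
    maxValC (fun i : ι => fun ψ' : (V ⊕ Fin 2) → A =>
        (ψ' (Sum.inl (he i).1), ψ' (Sum.inl (he i).2)) ∈ hc i ∨
          ψ' (Sum.inr 0) = ψ' (Sum.inr 1))
      (fun _ => a) (fun _ => b) < 1 - ε := by
  set sat : ι → (V → A) → Prop := fun i ψ => (ψ (he i).1, ψ (he i).2) ∈ hc i
  have : Nonempty (V → A) := ⟨fun _ => a⟩
  obtain ⟨_, ⟨ψM, rfl⟩, hM⟩ :=
    Set.exists_max_image _ id (finite_range_valC sat) (Set.range_nonempty _)
  refine (Real.sSup_le ?_ (valC_nonneg sat ψM)).trans_lt (h ψM)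
  rintro r ⟨l, -, hhead, hlast, hchain, rfl⟩
  obtain ⟨ψ', hψ', hxy⟩ := exists_apply_ne_of_isChain_adjOne hchain hhead hlast hab
    (show (Sum.inr 0 : V ⊕ Fin 2) ≠ Sum.inr 1 by simp)
  calc valSeqC _ l ≤ valC _ ψ' := valSeqC_le_of_mem hψ'
    _ = valC (fun i ψ' => sat i (ψ' ∘ Sum.inl)) ψ' :=
      valC_or_of_not (q := fun ψ' : V ⊕ Fin 2 → A => ψ' (Sum.inr 0) = ψ' (Sum.inr 1)) hxy
    _ = valC sat (ψ' ∘ Sum.inl) := rfl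
    _ ≤ valC sat ψM := hM _ ⟨_, rfl⟩

/-- soundness of the 2-CSP-to-4-CSP construction.  Given a binary constraint
graph (edges indexed by nonempty `ι`, endpoints `he`, constraints `hc`), distinct values
`a ≠ b`, and fresh vertices `x = inr 0`, `y = inr 1`, the 4-ary graph `G'` has one hyperedge
`(v, w, x, y)` per edge `(v, w)`, satisfied iff the original constraint holds or `x` and `y`
take the same value.  If every assignment for `G` has value less than `1 − ε`, then
`val_{G'}(ψ'ᵢₙᵢ ↭ ψ'ₜₐᵣ) < 1 − ε` for the constant-`a` and constant-`b` assignments. -/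
theorem two_to_four_soundness {V A ι : Type*} [Fintype V] [Fintype A]
    [Fintype ι] [Nonempty ι]
    (he : ι → V × V) (hc : ι → Set (A × A)) (a b : A) (hab : a ≠ b)
    (ε : ℝ) (hε0 : 0 < ε) (hε1 : ε < 1)
    (h : ∀ ψ : V → A, valC (fun i ψ => (ψ (he i).1, ψ (he i).2) ∈ hc i) ψ < 1 - ε) :
    maxValC (fun i : ι => fun ψ' : (V ⊕ Fin 2) → A =>
        (ψ' (Sum.inl (he i).1), ψ' (Sum.inl (he i).2)) ∈ hc i ∨
          ψ' (Sum.inr 0) = ψ' (Sum.inr 1))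
      (fun _ => a) (fun _ => b) < 1 - ε :=
  two_to_four_soundness_general he hc a b hab ε h
end
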